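/- Let 0 < θ < 2, α₀ < 0, β₀ = 2, and t₂ = -4/α₀. Define, for t ∈ (0, t₂), ζ(t) = arccos((α₀ t + β₀)/2) + α₀ t^{1/θ} ∫_{t₂}^{t} φ^{-1/θ}/√(4 - (α₀ φ + β₀)²) dφ. Then ζ is differentiable on (0, t₂) and satisfies the functional differential equation ζ(t) - θ t ζ'(t) = arccos((α₀ t + β₀)/2) for all t ∈ (0, t₂). -/

import Mathlib

open Real MeasureTheory Set intervalIntegral

theorem zeta_satisfies_characteristic_equation (θ α₀ β₀ : ℝ)
    (hθ : 0 < θ) (hθ2 : θ < 2) (hα : α₀ < 0) (hβ : β₀ = 2)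
    (ζ : ℝ → ℝ)
    (hζ : ∀ t ∈ Set.Ioo (0 : ℝ) (-4 / α₀),
      ζ t = Real.arccos ((α₀ * t + β₀) / 2) +
        α₀ * t ^ (1 / θ) *
          ∫ φ in (-4 / α₀)..t, φ ^ (-(1 / θ)) / Real.sqrt (4 - (α₀ * φ + β₀) ^ 2)) :
    ∀ t ∈ Set.Ioo (0 : ℝ) (-4 / α₀),
      DifferentiableAt ℝ ζ t ∧
      ζ t - θ * t * deriv ζ t = Real.arccos ((α₀ * t + β₀) / 2) := by
  subst hβ
  intro t ht
  obtain ⟨ht0, htT⟩ := ht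
  set T : ℝ := -4 / α₀ with hTdef
  have hα0 : α₀ ≠ 0 := hα.ne
  have hT0 : 0 < T := by
    rw [hTdef, div_pos_iff]; right; constructor <;> linarith
  set f : ℝ → ℝ := fun φ => φ ^ (-(1 / θ)) / Real.sqrt (4 - (α₀ * φ + 2) ^ 2) with hfdef
  -- algebraic identity
  have hD : ∀ φ : ℝ, 4 - (α₀ * φ + 2) ^ 2 = α₀ ^ 2 * φ * (T - φ) := by
    intro φ
    have : α₀ ^ 2 * φ * T = -4 * α₀ * φ := by
      rw [hTdef]; field_simp
    nlinarith [this]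
  have hDt : 0 < 4 - (α₀ * t + 2) ^ 2 := by
    rw [hD t]
    have h1 : 0 < T - t := by linarith
    positivity
  have hsqDt : 0 < Real.sqrt (4 - (α₀ * t + 2) ^ 2) := Real.sqrt_pos.mpr hDt
  -- measurability of f
  have hfm : Measurable f := by
    rw [hfdef]; fun_prop
  -- integrability of f on T..t
  have hint : IntervalIntegrable f volume T t := by
    apply IntervalIntegrable.symm
    rw [intervalIntegrable_iff, uIoc_of_le htT.le]
    set C : ℝ := t ^ (-(1 / θ) - 1 / 2) / (-α₀) with hCdef
    have hC0 : 0 ≤ C := by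
      apply div_nonneg (Real.rpow_nonneg ht0.le _); linarith
    have hg : IntegrableOn (fun φ => C * (T - φ) ^ (-(1 / 2) : ℝ)) (Ioc t T) volume := by
      have h1 : IntervalIntegrable (fun x : ℝ => x ^ (-(1 / 2) : ℝ)) volume 0 (T - t) :=
        intervalIntegral.intervalIntegrable_rpow' (by norm_num)
      have h2 := (h1.comp_sub_left T).const_mul C
      rw [intervalIntegrable_iff] at h2
      simp only [sub_zero, sub_sub_cancel] at h2
      rwa [uIoc_comm, uIoc_of_le htT.le] at h2
    apply hg.mono' (hfm.aestronglyMeasurable)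
    filter_upwards [ae_restrict_mem measurableSet_Ioc] with φ hφ
    obtain ⟨hφt, hφT⟩ := hφ
    have hφ0 : 0 < φ := lt_trans ht0 hφt
    have hTφ : 0 ≤ T - φ := by linarith
    have hfeq : f φ = φ ^ (-(1 / θ) - 1 / 2) / (-α₀) * (T - φ) ^ (-(1 / 2) : ℝ) := by
      rw [hfdef]
      simp only
      rw [hD φ, show α₀ ^ 2 * φ * (T - φ) = α₀ ^ 2 * φ * (T - φ) from rfl,
        Real.sqrt_mul (by positivity) (T - φ), Real.sqrt_mul (sq_nonneg α₀) φ,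
        Real.sqrt_sq_eq_abs, abs_of_neg hα]
      rw [Real.rpow_sub hφ0, ← Real.sqrt_eq_rpow φ,
        Real.rpow_neg hTφ, ← Real.sqrt_eq_rpow (T - φ)]
      rw [div_eq_mul_inv, div_eq_mul_inv, div_eq_mul_inv, div_eq_mul_inv, mul_inv, mul_inv]
      ring
    rw [hfeq]
    have hf_nonneg : 0 ≤ φ ^ (-(1 / θ) - 1 / 2) / (-α₀) * (T - φ) ^ (-(1 / 2) : ℝ) := by
      apply mul_nonneg (div_nonneg (Real.rpow_nonneg hφ0.le _) (by linarith))
        (Real.rpow_nonneg hTφ _)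
    rw [Real.norm_eq_abs, abs_of_nonneg hf_nonneg]
    have h1 : φ ^ (-(1 / θ) - 1 / 2) ≤ t ^ (-(1 / θ) - 1 / 2) := by
      apply Real.rpow_le_rpow_of_nonpos ht0 hφt.le
      have : 0 < 1 / θ := by positivity
      linarith
    have h2 : φ ^ (-(1 / θ) - 1 / 2) / (-α₀) ≤ C := by
      rw [hCdef]
      exact (div_le_div_iff_of_pos_right (by linarith : (0:ℝ) < -α₀)).mpr h1
    exact mul_le_mul_of_nonneg_right h2 (Real.rpow_nonneg hTφ _)
  -- continuity of f at t
  have hct : ContinuousAt f t := by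
    apply ContinuousAt.div
    · exact (Real.continuousAt_rpow_const t _ (Or.inl ht0.ne')).congr (by rfl)
    · exact Real.continuous_sqrt.continuousAt.comp (by fun_prop)
    · exact hsqDt.ne'
  -- FTC
  have hI : HasDerivAt (fun u => ∫ φ in T..u, f φ) (f t) t :=
    intervalIntegral.integral_hasDerivAt_right hint
      (hfm.stronglyMeasurable.stronglyMeasurableAtFilter) hct
  -- arccos part
  set x : ℝ := (α₀ * t + 2) / 2 with hxdef
  have hx1 : x ≠ -1 := by
    intro h; rw [hxdef] at h
    have : α₀ * t + 2 = -2 := by linarith [h]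
    nlinarith
  have hx2 : x ≠ 1 := by
    intro h; rw [hxdef] at h
    have : α₀ * t + 2 = 2 := by linarith [h]
    nlinarith
  have hlin : HasDerivAt (fun u => (α₀ * u + 2) / 2) (α₀ / 2) t := by
    have := (((hasDerivAt_id t).const_mul α₀).add_const 2).div_const 2
    simpa using this
  have hA : HasDerivAt (fun u => Real.arccos ((α₀ * u + 2) / 2))
      (-(1 / Real.sqrt (1 - x ^ 2)) * (α₀ / 2)) t :=
    by have := (Real.hasDerivAt_arccos hx1 hx2).comp t hlin; exact this
  -- rpow part
  have hp : HasDerivAt (fun u : ℝ => α₀ * u ^ (1 / θ)) (α₀ * (1 / θ * t ^ (1 / θ - 1))) t := by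
    exact (Real.hasDerivAt_rpow_const (Or.inl ht0.ne')).const_mul α₀
  -- combine
  set I : ℝ → ℝ := fun u => ∫ φ in T..u, f φ with hIdef
  have hF : HasDerivAt (fun u => Real.arccos ((α₀ * u + 2) / 2) + α₀ * u ^ (1 / θ) * I u)
      (-(1 / Real.sqrt (1 - x ^ 2)) * (α₀ / 2) +
        (α₀ * (1 / θ * t ^ (1 / θ - 1)) * I t + α₀ * t ^ (1 / θ) * f t)) t :=
    hA.add (hp.mul hI)
  have hev : (fun u => Real.arccos ((α₀ * u + 2) / 2) + α₀ * u ^ (1 / θ) * I u) =ᶠ[nhds t] ζ := by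
    filter_upwards [Ioo_mem_nhds ht0 htT] with u hu
    exact (hζ u hu).symm
  have hζd : HasDerivAt ζ
      (-(1 / Real.sqrt (1 - x ^ 2)) * (α₀ / 2) +
        (α₀ * (1 / θ * t ^ (1 / θ - 1)) * I t + α₀ * t ^ (1 / θ) * f t)) t :=
    hF.congr_of_eventuallyEq hev.symm
  refine ⟨hζd.differentiableAt, ?_⟩
  rw [hζd.deriv, hζ t ⟨ht0, htT⟩]
  -- simplify
  have hsq : Real.sqrt (1 - x ^ 2) = Real.sqrt (4 - (α₀ * t + 2) ^ 2) / 2 := by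
    rw [show 1 - x ^ 2 = (4 - (α₀ * t + 2) ^ 2) / 4 from by rw [hxdef]; ring]
    rw [show (4 - (α₀ * t + 2) ^ 2) / 4 = (Real.sqrt (4 - (α₀ * t + 2) ^ 2) / 2) ^ 2 from by
      rw [div_pow, Real.sq_sqrt hDt.le]; norm_num]
    exact Real.sqrt_sq (by positivity)
  have hft : f t = t ^ (-(1 / θ)) / Real.sqrt (4 - (α₀ * t + 2) ^ 2) := rfl
  have hrp1 : t ^ (1 / θ - 1) * t = t ^ (1 / θ) := by
    calc t ^ (1 / θ - 1) * t = t ^ (1 / θ - 1) * t ^ (1 : ℝ) := by rw [Real.rpow_one]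
      _ = t ^ (1 / θ - 1 + 1) := (Real.rpow_add ht0 _ _).symm
      _ = t ^ (1 / θ) := by norm_num
  have hrp2 : t ^ (1 / θ) * t ^ (-(1 / θ)) = 1 := by
    rw [← Real.rpow_add ht0]; norm_num
  rw [hsq, hft]
  have hθ0 : θ ≠ 0 := hθ.ne'
  set S : ℝ := Real.sqrt (4 - (α₀ * t + 2) ^ 2) with hSdef
  have hS0 : S ≠ 0 := hsqDt.ne'
  have hθθ : θ * (1 / θ) = 1 := by field_simp
  have e1 : θ * t * (α₀ * (1 / θ * t ^ (1 / θ - 1)) * I t) = α₀ * t ^ (1 / θ) * I t := by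
    calc θ * t * (α₀ * (1 / θ * t ^ (1 / θ - 1)) * I t)
        = (θ * (1 / θ)) * α₀ * (t ^ (1 / θ - 1) * t) * I t := by ring
      _ = α₀ * t ^ (1 / θ) * I t := by rw [hθθ, hrp1]; ring
  have e2 : -(1 / (S / 2)) * (α₀ / 2) + α₀ * t ^ (1 / θ) * (t ^ (-(1 / θ)) / S) = 0 := by
    have h3 : α₀ * t ^ (1 / θ) * (t ^ (-(1 / θ)) / S) = α₀ / S := by
      calc α₀ * t ^ (1 / θ) * (t ^ (-(1 / θ)) / S)
          = α₀ * (t ^ (1 / θ) * t ^ (-(1 / θ))) / S := by ring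
        _ = α₀ / S := by rw [hrp2, mul_one]
    rw [h3, one_div_div]
    ring
  linear_combination (-1 : ℝ) * e1 - θ * t * e2
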